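/- Let d ≥ 2 and r > 0, and let ‖·‖ be either the ℓ² norm or the ℓ∞ norm on ℝ^d. For the potential φ(x,y) = +∞ if ‖x−y‖ < r and φ(x,y) = 0 otherwise on ℝ^d (with Lebesgue measure and the metric induced by ‖·‖), the potential-weighted connective constant satisfies Δ_φ < (1 − 8^{−(d+1)})·C_φ, where C_φ equals the Lebesgue volume of the ‖·‖-ball of radius r in ℝ^d. -/

import Mathlib

open MeasureTheory ENNReal Filter

noncomputable section

/-- `e^{-t}` for `t ∈ [0,∞]`, with `e^{-∞} = 0`. -/
def expNegE (t : ℝ≥0∞) : ℝ := if t = ∞ then 0 else Real.exp (-t.toReal)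

variable {X : Type*} [MetricSpace X] [MeasurableSpace X]

/-- The weight `1 - e^{-φ(x,y)}`, as an extended nonnegative real. -/
def pairWt (φ : X → X → ℝ≥0∞) (x y : X) : ℝ≥0∞ := ENNReal.ofReal (1 - expNegE (φ x y))

/-- A repulsive pair potential: symmetric and jointly measurable, values in `[0,∞]`. -/
def IsRepulsivePotential (φ : X → X → ℝ≥0∞) : Prop :=
  (∀ x y, φ x y = φ y x) ∧ Measurable (Function.uncurry φ)

/-- The temperedness constant `C_φ = sup_v ∫ (1 - e^{-φ(x,v)}) dμ(x)`. -/
def CPhi (μ : Measure X) (φ : X → X → ℝ≥0∞) : ℝ≥0∞ := ⨆ v : X, ∫⁻ x, pairWt φ x v ∂μ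

/-- `φ` is tempered if `C_φ < ∞`. -/
def Tempered (μ : Measure X) (φ : X → X → ℝ≥0∞) : Prop := CPhi μ φ < ∞

/-- A damping function: a `[0,1]`-valued measurable function on nonempty tuples which is `1`
on singletons and decreases when a point is prepended. A tuple `(v_0, …, v_n)` of length
`n+1` is modelled as an element of `Fin (n+1) → X`. -/
def IsDamping (γ : ∀ n : ℕ, (Fin (n + 1) → X) → ℝ) : Prop :=
  (∀ n, Measurable (γ n)) ∧ (∀ n v, γ n v ∈ Set.Icc (0 : ℝ) 1) ∧ (∀ v, γ 0 v = 1) ∧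
    ∀ n (v : Fin (n + 2) → X), γ (n + 1) v ≤ γ n fun i => v i.succ

/-- The tuple `(v_0, v_1, …, v_k)`. -/
def tupCons {k : ℕ} (v0 : X) (v : Fin k → X) : Fin (k + 1) → X := Fin.cons v0 v

/-- `V_k(γ) = sup_{v_0} ∫_{X^k} ∏_{j=1}^k γ(v_0,…,v_j)(1 - e^{-φ(v_j,v_{j-1})}) dμ^k`. -/
def VK (μ : Measure X) (φ : X → X → ℝ≥0∞) (γ : ∀ n : ℕ, (Fin (n + 1) → X) → ℝ)
    (k : ℕ) : ℝ≥0∞ :=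
  ⨆ v0 : X, ∫⁻ v : Fin k → X,
      ∏ j : Fin k,
        (ENNReal.ofReal (γ (j.1 + 1) fun i : Fin (j.1 + 2) =>
            tupCons v0 v ⟨i.1, by have h1 := i.isLt; have h2 := j.isLt; omega⟩) *
          pairWt φ (tupCons v0 v j.succ) (tupCons v0 v j.castSucc))
    ∂(Measure.pi fun _ : Fin k => μ)

/-- The potential-weighted connective constant `Δ_φ(γ) = inf_{k ≥ 1} V_k(γ)^{1/k}`. -/
def DeltaPhi (μ : Measure X) (φ : X → X → ℝ≥0∞)
    (γ : ∀ n : ℕ, (Fin (n + 1) → X) → ℝ) : ℝ≥0∞ :=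
  ⨅ k : ℕ, VK μ φ γ (k + 1) ^ (((k : ℝ) + 1)⁻¹)

/-- The damping function `γ_w(v_0,…,v_n) = exp(-∑_{i=0}^{n-2} 1{d(v_n,v_i)<d(v_i,v_{i+1})} φ(v_n,v_i))`. -/
def gammaW (φ : X → X → ℝ≥0∞) : ∀ n : ℕ, (Fin (n + 1) → X) → ℝ := fun n v =>
  expNegE (∑ i : Fin (n - 1),
    if dist (v (Fin.last n)) (v ⟨i.1, by have := i.isLt; omega⟩) <
        dist (v ⟨i.1, by have := i.isLt; omega⟩) (v ⟨i.1 + 1, by have := i.isLt; omega⟩)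
    then φ (v (Fin.last n)) (v ⟨i.1, by have := i.isLt; omega⟩) else 0)

/-- Assumption 1: the pushforward of `μ` under `y ↦ d(y,x)` is absolutely continuous
with respect to Lebesgue measure, for every `x`. -/
def Assumption1 (μ : Measure X) : Prop :=
  ∀ x : X, (μ.map fun y => dist y x).AbsolutelyContinuous (volume : Measure ℝ)

/-- An infinite-depth tree recursion adapted to activity `λ` and damping function `γ`. -/
def IsInfTreeRecursion (μ : Measure X) (φ : X → X → ℝ≥0∞) (lam : ℝ)
    (γ π : ∀ n : ℕ, (Fin (n + 1) → X) → ℝ) : Prop :=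
  (∀ n, Measurable (π n)) ∧ (∀ n v, π n v ∈ Set.Icc (0 : ℝ) lam) ∧
    ∀ n : ℕ, ∀ᵐ v ∂(Measure.pi fun _ : Fin (n + 1) => μ),
      π n v = lam * γ n v *
        Real.exp (-(∫⁻ w, pairWt φ (v (Fin.last n)) w *
            ENNReal.ofReal (π (n + 1) (Fin.snoc v w)) ∂μ).toReal)

end

/-- The hard-sphere potential of radius `r` on a metric space: `+∞` within distance `r`,
`0` otherwise. -/
noncomputable def hardSphere {E : Type*} [MetricSpace E] (r : ℝ) : E → E → ℝ≥0∞ :=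
  fun x y => if dist x y < r then ∞ else 0

section Aux

open Metric

lemma expNegE_top : expNegE ∞ = 0 := by simp [expNegE]
lemma expNegE_zero : expNegE 0 = 1 := by simp [expNegE]

lemma expNegE_nonneg (t : ℝ≥0∞) : 0 ≤ expNegE t := by
  unfold expNegE; split
  · exact le_rfl
  · exact (Real.exp_pos _).le

lemma expNegE_le_one (t : ℝ≥0∞) : expNegE t ≤ 1 := by
  unfold expNegE; split
  · norm_num
  · exact Real.exp_le_one_iff.mpr (by simp [ENNReal.toReal_nonneg])

lemma ofReal_expNegE_le_one (t : ℝ≥0∞) : ENNReal.ofReal (expNegE t) ≤ 1 := by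
  rw [show (1 : ℝ≥0∞) = ENNReal.ofReal 1 by simp]
  exact ENNReal.ofReal_le_ofReal (expNegE_le_one t)

lemma sum_fin_eq_of_eq {M : Type*} [AddCommMonoid M] {m : ℕ} (h : m = 1) (f : Fin m → M) :
    ∑ i, f i = f ⟨0, by omega⟩ := by subst h; exact Fin.sum_univ_one f

variable {X : Type*} [MetricSpace X] [MeasurableSpace X]

lemma pairWt_hardSphere (r : ℝ) (x y : X) :
    pairWt (hardSphere r) x y = if dist x y < r then 1 else 0 := by
  unfold pairWt hardSphere; split <;> simp [expNegE_top, expNegE_zero]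

lemma pairWt_le_one (φ : X → X → ℝ≥0∞) (x y : X) : pairWt φ x y ≤ 1 := by
  unfold pairWt
  rw [show (1 : ℝ≥0∞) = ENNReal.ofReal 1 by simp]
  exact ENNReal.ofReal_le_ofReal (by have := expNegE_nonneg (φ x y); linarith)

/-- The integrand of `VK` at `k = 2`. -/
lemma vk2_integrand (φ : X → X → ℝ≥0∞) (v0 : X) (v : Fin 2 → X) :
    (∏ j : Fin 2,
        (ENNReal.ofReal (gammaW φ (j.1 + 1) fun i : Fin (j.1 + 2) =>
            tupCons v0 v ⟨i.1, by have h1 := i.isLt; have h2 := j.isLt; omega⟩) *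
          pairWt φ (tupCons v0 v j.succ) (tupCons v0 v j.castSucc)))
    = ENNReal.ofReal (expNegE (if dist (v 1) v0 < dist v0 (v 0) then φ (v 1) v0 else 0)) *
        (pairWt φ (v 0) v0 * pairWt φ (v 1) (v 0)) := by
  rw [Fin.prod_univ_two]
  have h0 : tupCons v0 v (0 : Fin 2).castSucc = v0 := rfl
  have h1 : tupCons v0 v (0 : Fin 2).succ = v 0 := rfl
  have h2 : tupCons v0 v (1 : Fin 2).castSucc = v 0 := rfl
  have h3 : tupCons v0 v (1 : Fin 2).succ = v 1 := rfl
  rw [h0, h1, h2, h3]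
  have g1 : (gammaW φ ((0 : Fin 2).1 + 1) fun i : Fin ((0 : Fin 2).1 + 2) =>
      tupCons v0 v ⟨i.1, by have h1 := i.isLt; omega⟩) = 1 := by
    simp [gammaW, expNegE_zero]
  have g2 : (gammaW φ ((1 : Fin 2).1 + 1) fun i : Fin ((1 : Fin 2).1 + 2) =>
      tupCons v0 v ⟨i.1, by have h1 := i.isLt; omega⟩) =
      expNegE (if dist (v 1) v0 < dist v0 (v 0) then φ (v 1) v0 else 0) := by
    simp only [gammaW]
    congr 1
    rw [sum_fin_eq_of_eq (rfl : (1 : Fin 2).1 + 1 - 1 = 1)]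
    rfl
  rw [g1, g2]
  simp only [ENNReal.ofReal_one, one_mul]
  ring

end Aux

section General

open Metric

variable {E : Type*} [NormedAddCommGroup E] [NormedSpace ℝ E] [MeasurableSpace E] [BorelSpace E]
  [FiniteDimensional ℝ E] (μ : Measure E) [μ.IsAddHaarMeasure]

lemma CPhi_hardSphere (r : ℝ) : CPhi μ (hardSphere r) = μ (ball (0 : E) r) := by
  have key : ∀ v : E, ∫⁻ x, pairWt (hardSphere r) x v ∂μ = μ (ball (0 : E) r) := by
    intro v
    have : ∀ x : E, pairWt (hardSphere r) x v = (ball v r).indicator 1 x := by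
      intro x
      rw [pairWt_hardSphere]
      by_cases h : dist x v < r <;> simp [Set.indicator_apply, Metric.mem_ball, h]
    simp_rw [this]
    rw [lintegral_indicator_one measurableSet_ball]
    exact Measure.addHaar_ball_center μ v r
  unfold CPhi
  simp_rw [key]
  exact ciSup_const

lemma main_general (hd : 2 ≤ Module.finrank ℝ E) {r : ℝ} (hr : 0 < r) :
    DeltaPhi μ (hardSphere r) (gammaW (hardSphere r)) <
      ENNReal.ofReal (1 - (1 / 8 : ℝ) ^ (Module.finrank ℝ E + 1)) * CPhi μ (hardSphere r) := by
  classical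
  set d := Module.finrank ℝ E with hdd
  haveI : Nontrivial E := Module.nontrivial_of_finrank_pos (R := ℝ)
    (by omega : 0 < Module.finrank ℝ E)
  set ω := μ (ball (0 : E) 1) with hωdef
  have hω0 : ω ≠ 0 := (measure_ball_pos μ 0 one_pos).ne'
  have hωt : ω ≠ ∞ := measure_ball_lt_top.ne
  set A := r ^ d with hA
  have hA0 : (0 : ℝ) < A := pow_pos hr d
  set x := (1 / 2 : ℝ) ^ d with hx
  have hx0 : (0 : ℝ) < x := by positivity
  have hx1 : x ≤ 1 := pow_le_one₀ (by norm_num) (by norm_num)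
  have hx4 : x ≤ 1 / 4 := by
    calc x ≤ (1 / 2 : ℝ) ^ 2 := pow_le_pow_of_le_one (by norm_num) (by norm_num) hd
      _ = 1 / 4 := by norm_num
  have hball : ∀ (c : E) (t : ℝ), 0 ≤ t → μ (ball c t) = ENNReal.ofReal (t ^ d) * ω :=
    fun c t ht => Measure.addHaar_ball μ c ht
  clear_value ω
  have hrx : (r / 2) ^ d = A * x := by
    have h : (r / 2 : ℝ) = r * (1 / 2) := by ring
    rw [h, mul_pow, ← hA, ← hx]
  have hrx2 : (r / 4) ^ d = A * x ^ 2 := by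
    have h : (r / 4 : ℝ) = r * (1 / 2) ^ 2 := by rw [show ((1:ℝ)/2)^2 = 1/4 by norm_num]; ring
    rw [h, mul_pow, ← pow_mul, mul_comm 2 d, pow_mul, ← hA, ← hx]
  clear_value A x
  -- the VK bound
  have hVK : VK μ (hardSphere r) (gammaW (hardSphere r)) 2 ≤
      ω ^ 2 * ENNReal.ofReal (A ^ 2 * (1 - x ^ 2 + x ^ 3)) := by
    rw [VK]
    refine iSup_le fun v0 => ?_
    set S : Set (E × E) := {p : E × E | dist p.1 v0 < r ∧ dist p.2 p.1 < r ∧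
        ¬ dist p.2 (midpoint ℝ v0 p.1) < dist v0 p.1 / 2} with hS
    have hSmeas : MeasurableSet S := by
      have c1 : Continuous fun p : E × E => dist p.1 v0 := by fun_prop
      have cm : Continuous fun p : E × E => midpoint ℝ v0 p.1 := by
        simp only [midpoint_eq_smul_add]
        fun_prop
      have c2 : Continuous fun p : E × E => dist p.2 p.1 := by fun_prop
      have c3 : Continuous fun p : E × E => dist p.2 (midpoint ℝ v0 p.1) :=
        continuous_snd.dist cm
      have c4 : Continuous fun p : E × E => dist v0 p.1 / 2 := by fun_prop
      exact (measurableSet_lt c1.measurable measurable_const).inter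
        ((measurableSet_lt c2.measurable measurable_const).inter
          (measurableSet_lt c3.measurable c4.measurable).compl)
    have hle : ∀ v : Fin 2 → E,
        (∏ j : Fin 2,
          (ENNReal.ofReal (gammaW (hardSphere r) (j.1 + 1) fun i : Fin (j.1 + 2) =>
              tupCons v0 v ⟨i.1, by have h1 := i.isLt; have h2 := j.isLt; omega⟩) *
            pairWt (hardSphere r) (tupCons v0 v j.succ) (tupCons v0 v j.castSucc)))
          ≤ S.indicator 1 (v 0, v 1) := by
      intro v
      rw [vk2_integrand]
      by_cases h1 : dist (v 0) v0 < r
      · by_cases h2 : dist (v 1) (v 0) < r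
        · by_cases h3 : dist (v 1) (midpoint ℝ v0 (v 0)) < dist v0 (v 0) / 2
          · have hm : dist (midpoint ℝ v0 (v 0)) v0 = dist v0 (v 0) / 2 := by
              rw [dist_midpoint_left, Real.norm_two]; ring
            have hclose : dist (v 1) v0 < dist v0 (v 0) := by
              calc dist (v 1) v0
                  ≤ dist (v 1) (midpoint ℝ v0 (v 0)) + dist (midpoint ℝ v0 (v 0)) v0 :=
                    dist_triangle _ _ _
                _ < dist v0 (v 0) / 2 + dist v0 (v 0) / 2 := by rw [hm]; linarith
                _ = dist v0 (v 0) := by ring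
            have hlt_r : dist (v 1) v0 < r :=
              lt_of_lt_of_le hclose (by rw [dist_comm v0 (v 0)]; exact h1.le)
            have hinf : (if dist (v 1) v0 < dist v0 (v 0)
                then hardSphere r (v 1) v0 else 0) = ∞ := by
              rw [if_pos hclose]; unfold hardSphere; rw [if_pos hlt_r]
            rw [hinf, expNegE_top]
            simp
          · have hmem : (v 0, v 1) ∈ S := ⟨h1, h2, h3⟩
            rw [Set.indicator_of_mem hmem]
            calc ENNReal.ofReal (expNegE (if dist (v 1) v0 < dist v0 (v 0)
                    then hardSphere r (v 1) v0 else 0)) *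
                  (pairWt (hardSphere r) (v 0) v0 * pairWt (hardSphere r) (v 1) (v 0))
                ≤ 1 * (1 * 1) := by
                  gcongr
                  · exact ofReal_expNegE_le_one _
                  · exact pairWt_le_one _ _ _
                  · exact pairWt_le_one _ _ _
              _ = (1 : E × E → ℝ≥0∞) (v 0, v 1) := by simp
        · rw [pairWt_hardSphere r (v 1) (v 0), if_neg h2]
          simp
      · rw [pairWt_hardSphere r (v 0) v0, if_neg h1]
        simp
    set CC : ℝ≥0∞ := ENNReal.ofReal A * ω with hCC
    set K : ℝ≥0∞ := ENNReal.ofReal (A - A * x ^ 2) * ω with hK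
    set H : E → ℝ≥0∞ := fun a => (ball v0 (r / 2)).indicator (fun _ => CC) a +
        ((ball v0 r) \ ball v0 (r / 2)).indicator (fun _ => K) a with hH
    have hptwise : ∀ a : E, μ (Prod.mk a ⁻¹' S) ≤ H a := by
      intro a
      by_cases h1 : dist a v0 < r
      · have hpre : Prod.mk a ⁻¹' S = ball a r \ ball (midpoint ℝ v0 a) (dist v0 a / 2) := by
          ext b
          simp only [Set.mem_preimage, hS, Set.mem_setOf_eq, Set.mem_diff, mem_ball]
          constructor
          · rintro ⟨-, hb, hnb⟩; exact ⟨hb, hnb⟩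
          · rintro ⟨hb, hnb⟩; exact ⟨h1, hb, hnb⟩
        have hs : dist v0 a < r := by rwa [dist_comm]
        have hma : dist (midpoint ℝ v0 a) a = dist v0 a / 2 := by
          rw [dist_midpoint_right, Real.norm_two]; ring
        have hsub : ball (midpoint ℝ v0 a) (dist v0 a / 2) ⊆ ball a r := by
          intro z hz
          rw [mem_ball] at hz ⊢
          calc dist z a ≤ dist z (midpoint ℝ v0 a) + dist (midpoint ℝ v0 a) a :=
                dist_triangle _ _ _
            _ < dist v0 a / 2 + dist v0 a / 2 := by rw [hma]; linarith
            _ = dist v0 a := by ring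
            _ < r := hs
        rw [hpre, measure_diff hsub measurableSet_ball.nullMeasurableSet
          measure_ball_lt_top.ne, hball a r hr.le, hball _ _ (by positivity)]
        by_cases h2 : dist a v0 < r / 2
        · have hHa : H a = CC := by
            have hmem : a ∈ ball v0 (r / 2) := mem_ball.mpr h2
            have hnot : a ∉ ball v0 r \ ball v0 (r / 2) := fun hc => hc.2 hmem
            rw [hH]
            simp only [Set.indicator_of_mem hmem, Set.indicator_of_notMem hnot, add_zero]
          rw [hHa, hCC, hA]
          exact tsub_le_self
        · have hmem : a ∈ ball v0 r \ ball v0 (r / 2) :=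
            ⟨mem_ball.mpr h1, fun hc => h2 (mem_ball.mp hc)⟩
          have hHa : H a = K := by
            have hnot : a ∉ ball v0 (r / 2) := fun hc => h2 (mem_ball.mp hc)
            rw [hH]
            simp only [Set.indicator_of_mem hmem, Set.indicator_of_notMem hnot, zero_add]
          rw [hHa, hK]
          have hge : A * x ^ 2 ≤ (dist v0 a / 2) ^ d := by
            rw [← hrx2]
            apply pow_le_pow_left₀ (by positivity)
            rw [dist_comm]
            have := not_lt.mp h2
            linarith
          calc ENNReal.ofReal (r ^ d) * ω - ENNReal.ofReal ((dist v0 a / 2) ^ d) * ω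
              ≤ ENNReal.ofReal (r ^ d) * ω - ENNReal.ofReal (A * x ^ 2) * ω := by
                apply tsub_le_tsub_left
                exact mul_le_mul_left (ENNReal.ofReal_le_ofReal hge) ω
            _ = ENNReal.ofReal (A - A * x ^ 2) * ω := by
                rw [← hA, ← ENNReal.sub_mul (fun _ _ => hωt),
                  ← ENNReal.ofReal_sub _ (by positivity)]
      · have hpre : Prod.mk a ⁻¹' S = ∅ := by
          ext b
          simp only [Set.mem_preimage, hS, Set.mem_setOf_eq, Set.mem_empty_iff_false,
            iff_false]
          rintro ⟨hc, -⟩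
          exact h1 hc
        rw [hpre]
        simp [hH]
    have hannulus : μ (ball v0 r \ ball v0 (r / 2)) = ENNReal.ofReal (A - A * x) * ω := by
      rw [measure_diff (ball_subset_ball (by linarith)) measurableSet_ball.nullMeasurableSet
        measure_ball_lt_top.ne, hball v0 r hr.le, hball v0 (r / 2) (by positivity), hrx,
        ← hA, ← ENNReal.sub_mul (fun _ _ => hωt), ← ENNReal.ofReal_sub _ (by positivity)]
    have hHint : ∫⁻ a, H a ∂μ =
        CC * ENNReal.ofReal (A * x) * ω + K * ENNReal.ofReal (A - A * x) * ω := by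
      rw [hH]
      rw [lintegral_add_left (measurable_const.indicator measurableSet_ball)]
      rw [lintegral_indicator measurableSet_ball,
        lintegral_indicator (measurableSet_ball.diff measurableSet_ball)]
      rw [setLIntegral_const, setLIntegral_const]
      rw [hball v0 (r / 2) (by positivity), hrx, hannulus]
      ring
    calc ∫⁻ v : Fin 2 → E,
          (∏ j : Fin 2,
            (ENNReal.ofReal (gammaW (hardSphere r) (j.1 + 1) fun i : Fin (j.1 + 2) =>
                tupCons v0 v ⟨i.1, by have h1 := i.isLt; have h2 := j.isLt; omega⟩) *
              pairWt (hardSphere r) (tupCons v0 v j.succ) (tupCons v0 v j.castSucc)))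
          ∂(Measure.pi fun _ : Fin 2 => μ)
        ≤ ∫⁻ v : Fin 2 → E, S.indicator 1 (v 0, v 1) ∂(Measure.pi fun _ : Fin 2 => μ) :=
          lintegral_mono hle
      _ = ∫⁻ p : E × E, S.indicator 1 p ∂(μ.prod μ) :=
          (measurePreserving_finTwoArrow μ).lintegral_comp
            (measurable_one.indicator hSmeas)
      _ = (μ.prod μ) S := lintegral_indicator_one hSmeas
      _ = ∫⁻ a, μ (Prod.mk a ⁻¹' S) ∂μ := Measure.prod_apply hSmeas
      _ ≤ ∫⁻ a, H a ∂μ := lintegral_mono hptwise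
      _ = CC * ENNReal.ofReal (A * x) * ω + K * ENNReal.ofReal (A - A * x) * ω := hHint
      _ = ω ^ 2 * ENNReal.ofReal (A ^ 2 * (1 - x ^ 2 + x ^ 3)) := by
          rw [hCC, hK]
          have hx2le : x ^ 2 ≤ 1 := pow_le_one₀ hx0.le hx1
          have hAx2 : (0 : ℝ) ≤ A - A * x ^ 2 := by
            nlinarith [mul_nonneg hA0.le (sub_nonneg.mpr hx2le)]
          have hAx : (0 : ℝ) ≤ A - A * x := by
            nlinarith [mul_nonneg hA0.le (sub_nonneg.mpr hx1)]
          have e1 : ENNReal.ofReal A * ω * ENNReal.ofReal (A * x) * ω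
              = ENNReal.ofReal (A * (A * x)) * ω ^ 2 := by
            simp only [ENNReal.ofReal_mul hA0.le]; ring
          have e2 : ENNReal.ofReal (A - A * x ^ 2) * ω * ENNReal.ofReal (A - A * x) * ω
              = ENNReal.ofReal ((A - A * x ^ 2) * (A - A * x)) * ω ^ 2 := by
            simp only [ENNReal.ofReal_mul hAx2]; ring
          rw [e1, e2, ← add_mul,
            ← ENNReal.ofReal_add (mul_nonneg hA0.le (mul_nonneg hA0.le hx0.le))
              (mul_nonneg hAx2 hAx), mul_comm]
          congr 1
          ring
  -- conclude
  rw [CPhi_hardSphere, hball 0 r hr.le, ← hA]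
  set y := (1 / 8 : ℝ) ^ (d + 1) with hy
  have hyx : y = x ^ 3 * (1 / 8) := by
    rw [hy, hx, show (1 / 8 : ℝ) = (1 / 2) ^ 3 by norm_num, ← pow_mul, ← pow_mul, ← pow_add]
    congr 1
    ring
  have hy1 : y < 1 := by nlinarith
  set T : ℝ≥0∞ := ENNReal.ofReal (1 - y) * (ENNReal.ofReal A * ω) with hT
  have hTeq : T = ENNReal.ofReal ((1 - y) * A) * ω := by
    rw [hT, ← mul_assoc, ← ENNReal.ofReal_mul (by linarith : (0:ℝ) ≤ 1 - y)]
  have hb : (0 : ℝ) < 1 - (5 / 4) * x + x ^ 4 / 64 := by nlinarith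
  have key : A ^ 2 * (1 - x ^ 2 + x ^ 3) < ((1 - y) * A) ^ 2 := by
    rw [hyx]
    nlinarith [mul_pos (mul_pos (pow_pos hA0 2) (pow_pos hx0 2)) hb]
  have hlt : ω ^ 2 * ENNReal.ofReal (A ^ 2 * (1 - x ^ 2 + x ^ 3)) < T ^ 2 := by
    rw [hTeq, mul_pow, ← ENNReal.ofReal_pow (mul_nonneg (by linarith) hA0.le), mul_comm]
    rw [ENNReal.mul_lt_mul_iff_left (pow_ne_zero 2 hω0) (ENNReal.pow_ne_top hωt)]
    rw [ENNReal.ofReal_lt_ofReal_iff (pow_pos (mul_pos (by linarith) hA0) 2)]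
    exact key
  have hD : DeltaPhi μ (hardSphere r) (gammaW (hardSphere r)) ≤
      VK μ (hardSphere r) (gammaW (hardSphere r)) 2 ^ ((1 : ℝ) / 2) := by
    have h := iInf_le (fun k : ℕ => VK μ (hardSphere r) (gammaW (hardSphere r)) (k + 1)
      ^ (((k : ℝ) + 1)⁻¹)) 1
    norm_num at h
    exact h
  calc DeltaPhi μ (hardSphere r) (gammaW (hardSphere r))
      ≤ VK μ (hardSphere r) (gammaW (hardSphere r)) 2 ^ ((1 : ℝ) / 2) := hD
    _ ≤ (ω ^ 2 * ENNReal.ofReal (A ^ 2 * (1 - x ^ 2 + x ^ 3))) ^ ((1 : ℝ) / 2) :=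
        ENNReal.rpow_le_rpow hVK (by norm_num)
    _ < (T ^ 2) ^ ((1 : ℝ) / 2) := ENNReal.rpow_lt_rpow hlt (by norm_num)
    _ = T := by
        rw [← ENNReal.rpow_natCast T 2, ← ENNReal.rpow_mul]
        norm_num

end General

/-- For hard spheres (ℓ² norm, on `EuclideanSpace ℝ (Fin d)`) or hard cubes
(ℓ∞ norm, on `Fin d → ℝ`) of radius `r > 0` in dimension `d ≥ 2`, the potential-weighted
connective constant satisfies `Δ_φ < (1 − 8^{-(d+1)}) C_φ`, where `C_φ` is the volume of
the ball of radius `r` in the corresponding norm. -/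
theorem hardSphere_hardCube_Delta_lt
    (d : ℕ) (hd : 2 ≤ d) (r : ℝ) (hr : 0 < r) :
    (CPhi (volume : Measure (EuclideanSpace ℝ (Fin d))) (hardSphere r) =
        volume (Metric.ball (0 : EuclideanSpace ℝ (Fin d)) r) ∧
      DeltaPhi (volume : Measure (EuclideanSpace ℝ (Fin d))) (hardSphere r)
          (gammaW (hardSphere r)) <
        ENNReal.ofReal (1 - (1 / 8 : ℝ) ^ (d + 1)) *
          CPhi (volume : Measure (EuclideanSpace ℝ (Fin d))) (hardSphere r)) ∧
    (CPhi (volume : Measure (Fin d → ℝ)) (hardSphere r) =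
        volume (Metric.ball (0 : Fin d → ℝ) r) ∧
      DeltaPhi (volume : Measure (Fin d → ℝ)) (hardSphere r)
          (gammaW (hardSphere r)) <
        ENNReal.ofReal (1 - (1 / 8 : ℝ) ^ (d + 1)) *
          CPhi (volume : Measure (Fin d → ℝ)) (hardSphere r)) := by
  constructor
  · refine ⟨CPhi_hardSphere _ r, ?_⟩
    have h := main_general (volume : Measure (EuclideanSpace ℝ (Fin d)))
      (by rw [finrank_euclideanSpace_fin]; exact hd) hr
    rwa [finrank_euclideanSpace_fin] at h
  · refine ⟨CPhi_hardSphere _ r, ?_⟩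
    have h := main_general (volume : Measure (Fin d → ℝ))
      (by rw [Module.finrank_fin_fun]; exact hd) hr
    rwa [Module.finrank_fin_fun] at h
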